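/- Let k ≥ 2 and suppose nonnegative integers n ≥ m ≥ l ≥ 0, d ≥ 2, 1 ≤ a ≤ 9 satisfy L_n^{(k)} · L_m^{(k)} · L_l^{(k)} = a·(10^d − 1)/9. Then |α^{−(n+m−2)} · 10^d · f_k(α)^{−2} · (2α − 1)^{−2} · (L_l^{(k)})^{−1} · (a/9) − 1| < (25/4)/α^{m−2}, where α is the dominant root of x^k − x^{k−1} − ⋯ − x − 1. -/

import Mathlib

/-!
Write `c = f_k(α) (2α - 1)` and let `e t = L_t - c α ^ (t - 1)` on `ℤ`, with `L` extended by zero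
to negative indices. Both `L` and `α ^ (t - 1)` satisfy `u (t + 1) + u (t - k) = 2 u t` for
`t ≥ 2`, hence so does `e`; together with `α ^ k (2 - α) = 1` this makes the defect
`α ^ k e t - ∑_{i<k} α ^ i e (t - 1 - i)` grow by the factor `α`, and the choice of `c` makes it
vanish at `t = 2`. So every `e t` with `t ≥ 2` is a weighted average of the `k` preceding values,
and `|e| ≤ 3/2` follows from the values at `t ≤ 1`. The linear form equals
`(L_n L_m L_l + a/9) / (c² α ^ (n + m - 2) L_l) - 1`, and expanding `L_n L_m` around
`c² α ^ (n + m - 2)` bounds it.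
-/

/-- The `k`-generalized Lucas sequence: `L 0 = 2`, `L 1 = 1`, and for `n ≥ 2`,
`L n = L (n-1) + L (n-2) + ⋯ + L (n-k)`, where terms with negative index count as `0`. -/
def lucasK (k : ℕ) : ℕ → ℕ
  | 0 => 2
  | 1 => 1
  | n + 2 => ∑ j ∈ Finset.range k, if _ : j ≤ n + 1 then lucasK k (n + 1 - j) else 0
termination_by n => n
decreasing_by omega

open Finset

lemma sum_pow_mul_shift {R : Type*} [CommRing R] (x : R) (f : ℤ → R) (k : ℕ) (t : ℤ) :
    ∑ i ∈ range k, x ^ i * f (t - i) + x ^ k * f (t - k) =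
      f t + x * ∑ i ∈ range k, x ^ i * f (t - 1 - i) := by
  have h := (sum_range_succ (fun i => x ^ i * f (t - i)) k).symm.trans
    (sum_range_succ' (fun i => x ^ i * f (t - i)) k)
  rw [h, mul_sum, add_comm]
  congr 1
  · simp
  · exact sum_congr rfl fun i _ => by push_cast; ring_nf

def weightedDefect (k : ℕ) (α : ℝ) (e : ℤ → ℝ) (t : ℤ) : ℝ :=
  α ^ k * e t - ∑ i ∈ range k, α ^ i * e (t - 1 - i)

lemma weightedDefect_add_one {k : ℕ} {α : ℝ} (hα : α ^ k * (2 - α) = 1) {e : ℤ → ℝ} {t : ℤ}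
    (he : e (t + 1) + e (t - k) = 2 * e t) :
    weightedDefect k α e (t + 1) = α * weightedDefect k α e t := by
  have h := sum_pow_mul_shift α e k t
  simp only [weightedDefect, add_sub_cancel_right]
  linear_combination -h + α ^ k * he + e t * hα

lemma weightedDefect_eq_zero {k : ℕ} {α : ℝ} (hα : α ^ k * (2 - α) = 1) {e : ℤ → ℝ}
    (he : ∀ t ≥ 2, e (t + 1) + e (t - k) = 2 * e t) (h2 : weightedDefect k α e 2 = 0)
    {t : ℤ} (ht : 2 ≤ t) : weightedDefect k α e t = 0 := by
  induction t, ht using Int.leInduction with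
  | base => exact h2
  | succ t ht ih => rw [weightedDefect_add_one hα (he t ht), ih, mul_zero]

lemma abs_le_of_weightedDefect_eq_zero {k : ℕ} {α B : ℝ} (hα : 0 < α)
    (hroot : α ^ k = ∑ i ∈ range k, α ^ i) {e : ℤ → ℝ}
    (hD : ∀ t ≥ 2, weightedDefect k α e t = 0) (hinit : ∀ t ≤ 1, |e t| ≤ B) (t : ℤ) :
    |e t| ≤ B := by
  suffices ∀ N : ℕ, ∀ t : ℤ, t ≤ N + 1 → |e t| ≤ B from this t.toNat t (by omega)
  intro N
  induction N with
  | zero => simpa using hinit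
  | succ N ih =>
    intro t ht
    rcases le_or_gt t (N + 1) with h | h
    · exact ih t h
    have hsum : α ^ k * |e t| ≤ α ^ k * B := by
      calc α ^ k * |e t| = |∑ i ∈ range k, α ^ i * e (t - 1 - i)| := by
            rw [← sub_eq_zero.1 (hD t (by omega)), abs_mul, abs_of_pos (pow_pos hα k)]
        _ ≤ ∑ i ∈ range k, α ^ i * B := by
            refine (abs_sum_le_sum_abs _ _).trans (sum_le_sum fun i _ => ?_)
            rw [abs_mul, abs_of_pos (by positivity)]
            exact mul_le_mul_of_nonneg_left (ih _ (by omega)) (by positivity)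
        _ = α ^ k * B := by rw [← sum_mul, hroot]
    exact le_of_mul_le_mul_left hsum (by positivity)

lemma pow_mul_two_sub_eq_one {k : ℕ} {α : ℝ} (hroot : α ^ k = ∑ i ∈ range k, α ^ i) :
    α ^ k * (2 - α) = 1 := by
  linear_combination (geom_sum_mul α k).symm - (α - 1) * hroot

lemma four_mul_sub_one_le_two_pow (k : ℕ) : 4 * ((k : ℝ) - 1) ≤ 2 ^ k := by
  rcases Nat.lt_or_ge k 2 with hk | hk
  · interval_cases k <;> norm_num
  obtain ⟨j, rfl⟩ := Nat.exists_eq_add_of_le' hk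
  have : ((j + 1 : ℕ) : ℝ) ≤ 2 ^ j := by exact_mod_cast Nat.lt_two_pow_self
  push_cast at this ⊢
  rw [pow_add]
  linarith

lemma two_pow_neg_mul_two_pow (k : ℕ) : (2 : ℝ) ^ (-(k : ℤ)) * 2 ^ k = 1 := by simp

section DominantRoot

variable {k : ℕ} {α : ℝ}

lemma three_halves_lt_of_two_mul_one_sub_lt (hk : 2 ≤ k)
    (hα₁ : 2 * (1 - (2 : ℝ) ^ (-(k : ℤ))) < α) : 3 / 2 < α := by
  have h4 : (2 : ℝ) ^ 2 ≤ 2 ^ k := pow_le_pow_right₀ (by norm_num) hk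
  nlinarith [two_pow_neg_mul_two_pow k, zpow_pos (two_pos : (0 : ℝ) < 2) (-(k : ℤ))]

lemma sub_one_mul_two_sub_le (hk : 1 ≤ k) (hα₁ : 2 * (1 - (2 : ℝ) ^ (-(k : ℤ))) < α) :
    ((k : ℝ) - 1) * (2 - α) ≤ 1 / 2 := by
  have hδ : (2 - α) * 2 ^ k < 2 := by
    nlinarith [two_pow_neg_mul_two_pow k,
      mul_lt_mul_of_pos_right hα₁ (pow_pos (two_pos : (0 : ℝ) < 2) k)]
  have hk1 : (0 : ℝ) ≤ (k : ℝ) - 1 := by simp; exact_mod_cast hk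
  nlinarith [four_mul_sub_one_le_two_pow k, mul_le_mul_of_nonneg_left hδ.le hk1,
    pow_pos (two_pos : (0 : ℝ) < 2) k]

end DominantRoot

lemma lucasK_add_two (k n : ℕ) :
    lucasK k (n + 2) = ∑ j ∈ range k, if j ≤ n + 1 then lucasK k (n + 1 - j) else 0 := by
  rw [lucasK]
  exact sum_congr rfl fun j _ => by split_ifs <;> rfl

lemma lucasK_pos {k : ℕ} (hk : 1 ≤ k) (n : ℕ) : 0 < lucasK k n := by
  induction n using Nat.strong_induction_on with
  | _ n ih =>
    match n with
    | 0 => simp [lucasK]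
    | 1 => simp [lucasK]
    | n + 2 =>
      rw [lucasK_add_two]
      exact lt_of_lt_of_le (by simpa using ih (n + 1) (by omega))
        (single_le_sum (f := fun j => if j ≤ n + 1 then lucasK k (n + 1 - j) else 0)
          (fun _ _ => Nat.zero_le _) (mem_range.2 hk))

lemma lucasK_two {k : ℕ} (hk : 2 ≤ k) : lucasK k 2 = 3 := by
  obtain ⟨k, rfl⟩ := Nat.exists_eq_add_of_le' hk
  rw [lucasK_add_two, sum_range_succ', sum_range_succ']
  simp [lucasK]

def lucasExt (k : ℕ) (t : ℤ) : ℝ := if 0 ≤ t then (lucasK k t.toNat : ℝ) else 0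

lemma lucasExt_natCast (k n : ℕ) : lucasExt k n = lucasK k n := by simp [lucasExt]

lemma lucasExt_of_neg {k : ℕ} {t : ℤ} (ht : t < 0) : lucasExt k t = 0 := by
  simp [lucasExt, not_le.2 ht]

lemma lucasExt_eq_sum (k : ℕ) {t : ℤ} (ht : 2 ≤ t) :
    lucasExt k t = ∑ i ∈ range k, lucasExt k (t - 1 - i) := by
  obtain ⟨n, rfl⟩ : ∃ n : ℕ, t = n + 2 := ⟨(t - 2).toNat, by omega⟩
  rw [show (n : ℤ) + 2 = ((n + 2 : ℕ) : ℤ) by push_cast; ring, lucasExt_natCast,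
    lucasK_add_two]
  push_cast
  refine sum_congr rfl fun i _ => ?_
  by_cases hi : i ≤ n + 1
  · rw [if_pos hi, show (n : ℤ) + 2 - 1 - i = ((n + 1 - i : ℕ) : ℤ) by omega,
      lucasExt_natCast]
  · rw [if_neg hi, lucasExt_of_neg (by omega)]

lemma lucasExt_add_one_add_sub (k : ℕ) {t : ℤ} (ht : 2 ≤ t) :
    lucasExt k (t + 1) + lucasExt k (t - k) = 2 * lucasExt k t := by
  have h := sum_pow_mul_shift 1 (lucasExt k) k t
  simp only [one_pow, one_mul] at h
  have h1 := lucasExt_eq_sum k (by omega : 2 ≤ t + 1)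
  simp only [add_sub_cancel_right] at h1
  linarith [lucasExt_eq_sum k ht]

/-- `f_k(α) (2α - 1)`, the leading coefficient in `lucasK k n ≈ f_k(α) (2α - 1) α ^ (n - 1)`. -/
noncomputable def binetCoeff (k : ℕ) (α : ℝ) : ℝ :=
  (α - 1) / (2 + ((k : ℝ) + 1) * (α - 2)) * (2 * α - 1)

section BinetCoeff

variable {k : ℕ} {α : ℝ} (h32 : 3 / 2 < α) (hα₂ : α < 2)
  (hδ : ((k : ℝ) - 1) * (2 - α) ≤ 1 / 2)
include h32 hα₂ hδ

omit hα₂ in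
lemma half_lt_two_add_mul_sub_two : 1 / 2 < 2 + ((k : ℝ) + 1) * (α - 2) := by linarith

lemma binetCoeff_lt_five_halves : binetCoeff k α < 5 / 2 := by
  have hD := half_lt_two_add_mul_sub_two h32 hδ
  rw [binetCoeff, div_mul_eq_mul_div, div_lt_iff₀ (by linarith)]
  have hδ2 : (2 - α) * (2 - α) < 1 / 2 * (1 / 2) :=
    mul_lt_mul'' (by linarith) (by linarith) (by linarith) (by linarith)
  nlinarith

lemma sub_half_lt_binetCoeff (hk : 2 ≤ k) : α - 1 / 2 < binetCoeff k α := by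
  have hD := half_lt_two_add_mul_sub_two h32 hδ
  have hk' : (2 : ℝ) ≤ k := by exact_mod_cast hk
  rw [binetCoeff, div_mul_eq_mul_div, lt_div_iff₀ (by linarith)]
  nlinarith

end BinetCoeff

noncomputable def binetError (k : ℕ) (α : ℝ) (t : ℤ) : ℝ :=
  lucasExt k t - binetCoeff k α * α ^ (t - 1)

section BinetError

variable {k : ℕ} {α : ℝ}

lemma binetError_add_one_add_sub (hα : α ≠ 0) (hgeom : α ^ k * (2 - α) = 1) {t : ℤ}
    (ht : 2 ≤ t) :
    binetError k α (t + 1) + binetError k α (t - k) = 2 * binetError k α t := by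
  have hpow : α ^ (t + 1 - 1) + α ^ (t - k - 1) = 2 * α ^ (t - 1) := by
    have h1 : α ^ (t + 1 - 1) = α ^ (t - k - 1) * α ^ k * α := by
      rw [← zpow_natCast, ← zpow_add₀ hα, ← zpow_add_one₀ hα]; ring_nf
    have h2 : α ^ (t - 1) = α ^ (t - k - 1) * α ^ k := by
      rw [← zpow_natCast, ← zpow_add₀ hα]; ring_nf
    rw [h1, h2]
    linear_combination -α ^ (t - k - 1) * hgeom
  simp only [binetError]
  linear_combination lucasExt_add_one_add_sub k ht - binetCoeff k α * hpow

lemma weightedDefect_binetError_two (hk : 2 ≤ k) (hα : α ≠ 0) (hgeom : α ^ k * (2 - α) = 1)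
    (hD : 2 + ((k : ℝ) + 1) * (α - 2) ≠ 0) (h2 : α ≠ 2) :
    weightedDefect k α (binetError k α) 2 = 0 := by
  set c := binetCoeff k α with hc
  have hcD : c * (2 + ((k : ℝ) + 1) * (α - 2)) = (2 * α - 1) * (α - 1) := by
    simp only [c, binetCoeff]; field_simp
  have hLucas : ∑ i ∈ range k, α ^ i * lucasExt k (2 - 1 - i) = 1 + 2 * α := by
    obtain ⟨j, rfl⟩ := Nat.exists_eq_add_of_le' hk
    rw [sum_range_succ', sum_range_succ']
    rw [sum_eq_zero fun i _ => by rw [lucasExt_of_neg (by omega), mul_zero]]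
    simp [lucasExt, lucasK]
    ring
  have hpow : ∀ i ∈ range k, α ^ i * (c * α ^ ((2 : ℤ) - 1 - i - 1)) = c := fun i _ => by
    rw [mul_left_comm, ← zpow_natCast, ← zpow_add₀ hα]; ring_nf; rw [zpow_zero, mul_one]
  have hsum : ∑ i ∈ range k, α ^ i * binetError k α (2 - 1 - i) = 1 + 2 * α - k * c := by
    simp only [binetError, ← hc, mul_sub, sum_sub_distrib, hLucas, sum_congr rfl hpow]
    simp
  have he2 : binetError k α 2 = 3 - c * α := by
    simp [binetError, c, lucasExt, lucasK_two hk]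
  have h : (2 - α) * weightedDefect k α (binetError k α) 2 = 0 := by
    rw [weightedDefect, hsum, he2]
    linear_combination (3 - c * α) * hgeom - hcD
  exact (mul_eq_zero.1 h).resolve_left (sub_ne_zero.2 h2.symm)

lemma abs_binetError_le_of_le_one (h32 : 3 / 2 < α) (hc₁ : α - 1 / 2 < binetCoeff k α)
    (hc₂ : binetCoeff k α < 5 / 2) {t : ℤ} (ht : t ≤ 1) : |binetError k α t| ≤ 3 / 2 := by
  have hα : 0 < α := by linarith
  have hc : 0 < binetCoeff k α := by linarith
  rw [abs_le]
  rcases lt_trichotomy t 0 with h | rfl | h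
  · have hle : α ^ (t - 1) ≤ α ^ (-2 : ℤ) := zpow_le_zpow_right₀ (by linarith) (by omega)
    have hsq : α ^ (-2 : ℤ) * α ^ 2 = 1 := by simp [hα.ne']
    have hw : α ^ (-2 : ℤ) ≤ 4 / 9 := by nlinarith [zpow_pos hα (-2 : ℤ)]
    rw [binetError, lucasExt_of_neg h]
    constructor <;> nlinarith [mul_le_mul_of_nonneg_left hle hc.le, zpow_pos hα (t - 1)]
  · have hinv : α⁻¹ * α = 1 := inv_mul_cancel₀ hα.ne'
    have hw : α⁻¹ < 2 / 3 := by nlinarith [inv_pos.2 hα]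
    simp [binetError, lucasExt, lucasK]
    constructor <;> nlinarith [inv_pos.2 hα]
  · obtain rfl : t = 1 := by omega
    simp [binetError, lucasExt, lucasK]
    constructor <;> linarith

theorem abs_lucasK_sub_binetCoeff_mul_le (hk : 2 ≤ k)
    (hroot : α ^ k = ∑ i ∈ range k, α ^ i)
    (hα₁ : 2 * (1 - (2 : ℝ) ^ (-(k : ℤ))) < α) (hα₂ : α < 2) (n : ℕ) :
    |(lucasK k n : ℝ) - binetCoeff k α * α ^ ((n : ℤ) - 1)| ≤ 3 / 2 := by
  have h32 := three_halves_lt_of_two_mul_one_sub_lt hk hα₁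
  have hδ := sub_one_mul_two_sub_le (by omega) hα₁
  have hgeom := pow_mul_two_sub_eq_one hroot
  have hD := half_lt_two_add_mul_sub_two h32 hδ
  have hdefect : ∀ t ≥ 2, weightedDefect k α (binetError k α) t = 0 :=
    fun t ht => weightedDefect_eq_zero hgeom
      (fun t ht => binetError_add_one_add_sub (by linarith) hgeom ht)
      (weightedDefect_binetError_two hk (by linarith) hgeom (by linarith) (by linarith)) ht
  have h := abs_le_of_weightedDefect_eq_zero (by linarith) hroot hdefect
    (fun t ht => abs_binetError_le_of_le_one h32 (sub_half_lt_binetCoeff h32 hα₂ hδ hk)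
      (binetCoeff_lt_five_halves h32 hα₂ hδ) ht) n
  rwa [binetError, lucasExt_natCast] at h

end BinetError

lemma abs_mul_sub_mul_le {Ln Lm x y : ℝ} (hn : |Ln - x| ≤ 3 / 2) (hm : |Lm - y| ≤ 3 / 2)
    (hLm : 0 ≤ Lm) (hx : 0 ≤ x) (hyx : y ≤ x) : |Ln * Lm - x * y| ≤ 3 * x + 9 / 4 := by
  calc |Ln * Lm - x * y| = |(Ln - x) * Lm + x * (Lm - y)| := by ring_nf
    _ ≤ |Ln - x| * Lm + x * |Lm - y| := by
        refine (abs_add_le _ _).trans_eq ?_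
        rw [abs_mul, abs_mul, abs_of_nonneg hLm, abs_of_nonneg hx]
    _ ≤ 3 / 2 * Lm + x * (3 / 2) := by gcongr
    _ ≤ 3 * x + 9 / 4 := by linarith [(abs_le.1 hm).2]

lemma abs_div_sub_one_lt {Ln Lm Ll r x y κ : ℝ} (hn : |Ln - x| ≤ 3 / 2) (hm : |Lm - y| ≤ 3 / 2)
    (hLm : 0 ≤ Lm) (hLl : 1 ≤ Ll) (hr₀ : 0 ≤ r) (hr₁ : r ≤ 1) (hy : 0 < y) (hyx : y ≤ x)
    (hx : 2 / 3 ≤ x) (hκ : 3 / 2 < κ) :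
    |(Ln * Lm * Ll + r) / (x * y * Ll) - 1| < 25 / 4 * κ / y := by
  have hprod := abs_mul_sub_mul_le hn hm hLm (by linarith) hyx
  have hnum : |Ln * Lm * Ll + r - x * y * Ll| < 25 / 4 * κ * x * Ll := by
    calc |Ln * Lm * Ll + r - x * y * Ll| = |Ll * (Ln * Lm - x * y) + r| := by ring_nf
      _ ≤ Ll * (3 * x + 9 / 4) + Ll := by
          refine (abs_add_le _ _).trans ?_
          rw [abs_mul, abs_of_nonneg (by linarith), abs_of_nonneg hr₀]
          gcongr
          linarith
      _ < 25 / 4 * κ * x * Ll := by nlinarith [mul_lt_mul_of_pos_right hκ (by linarith : 0 < x)]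
  have hden : 0 < x * y * Ll := by positivity
  calc |(Ln * Lm * Ll + r) / (x * y * Ll) - 1|
      = |Ln * Lm * Ll + r - x * y * Ll| / (x * y * Ll) := by
        rw [div_sub_one hden.ne', abs_div, abs_of_pos hden]
    _ < 25 / 4 * κ * x * Ll / (x * y * Ll) := div_lt_div_of_pos_right hnum hden
    _ = 25 / 4 * κ / y := by field_simp

lemma natCast_ten_pow_sub_one_div_nine (d : ℕ) :
    (((10 ^ d - 1) / 9 : ℕ) : ℝ) = (10 ^ d - 1) / 9 := by
  rw [Nat.cast_div (by simpa using Nat.sub_dvd_pow_sub_pow 10 1 d) (by norm_num),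
    Nat.cast_sub (Nat.one_le_pow _ _ (by norm_num))]
  push_cast
  ring

lemma zpow_mul_zpow_neg_two_eq_div {k n m : ℕ} {α x y z : ℝ} (hα : α ≠ 0) :
    α ^ (-((n : ℤ) + m - 2)) * x * ((α - 1) / (2 + ((k : ℝ) + 1) * (α - 2))) ^ (-2 : ℤ) *
        (2 * α - 1) ^ (-2 : ℤ) * y⁻¹ * z =
      x * z /
        (binetCoeff k α * α ^ ((n : ℤ) - 1) * (binetCoeff k α * α ^ ((m : ℤ) - 1)) * y) := by
  rw [show -((n : ℤ) + m - 2) = -((n - 1) + (m - 1)) by ring, zpow_neg, zpow_add₀ hα, binetCoeff]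
  field_simp

lemma div_zpow_sub_two_eq {c α : ℝ} (hc : c ≠ 0) (hα : α ≠ 0) (m : ℤ) (r : ℝ) :
    r / α ^ (m - 2) = r * (c * α) / (c * α ^ (m - 1)) := by
  rw [show m - 1 = m - 2 + 1 by ring, zpow_add_one₀ hα, mul_left_comm,
    mul_div_mul_left _ _ hc]
  field_simp

lemma two_thirds_le_mul_zpow {c α : ℝ} (hα : 3 / 2 < α) (hc : α - 1 / 2 < c) (n : ℕ) :
    2 / 3 ≤ c * α ^ ((n : ℤ) - 1) :=
  calc 2 / 3 ≤ c * α ^ (-1 : ℤ) := by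
        rw [zpow_neg_one, ← div_eq_mul_inv, le_div_iff₀ (by linarith)]; linarith
    _ ≤ c * α ^ ((n : ℤ) - 1) :=
        mul_le_mul_of_nonneg_left (zpow_le_zpow_right₀ (by linarith) (by omega)) (by linarith)

theorem linear_form_Lambda2_bound_general
    (k n m l d a : ℕ) (hk : 2 ≤ k) (hnm : m ≤ n)
    (ha9 : a ≤ 9)
    (heq : lucasK k n * lucasK k m * lucasK k l = a * ((10 ^ d - 1) / 9))
    (α : ℝ) (hroot : α ^ k = ∑ i ∈ Finset.range k, α ^ i)
    (hα₁ : 2 * (1 - (2 : ℝ) ^ (-(k : ℤ))) < α) (hα₂ : α < 2) :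
    |α ^ (-((n : ℤ) + m - 2)) * 10 ^ d *
        ((α - 1) / (2 + ((k : ℝ) + 1) * (α - 2))) ^ (-2 : ℤ) *
        (2 * α - 1) ^ (-2 : ℤ) * ((lucasK k l : ℝ))⁻¹ * ((a : ℝ) / 9) - 1|
      < (25 / 4) / α ^ ((m : ℤ) - 2) := by
  have h32 := three_halves_lt_of_two_mul_one_sub_lt hk hα₁
  have hα : 0 < α := by linarith
  have hc := sub_half_lt_binetCoeff h32 hα₂ (sub_one_mul_two_sub_le (by omega) hα₁) hk
  have hc₀ : 0 < binetCoeff k α := by linarith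
  have hbinet := abs_lucasK_sub_binetCoeff_mul_le hk hroot hα₁ hα₂
  have hsum : (10 : ℝ) ^ d * (a / 9) = lucasK k n * lucasK k m * lucasK k l + a / 9 := by
    have := congrArg (Nat.cast : ℕ → ℝ) heq
    push_cast [natCast_ten_pow_sub_one_div_nine] at this
    linarith
  rw [zpow_mul_zpow_neg_two_eq_div hα.ne', hsum, div_zpow_sub_two_eq hc₀.ne' hα.ne']
  exact abs_div_sub_one_lt (hbinet n) (hbinet m) (Nat.cast_nonneg _)
    (by exact_mod_cast lucasK_pos (by omega) l) (by positivity)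
    (by rw [div_le_one (by norm_num)]; exact_mod_cast ha9) (mul_pos hc₀ (zpow_pos hα _))
    (mul_le_mul_of_nonneg_left (zpow_le_zpow_right₀ (by linarith) (by omega)) hc₀.le)
    (two_thirds_le_mul_zpow h32 hc n) (by nlinarith)

theorem linear_form_Lambda2_bound
    (k n m l d a : ℕ) (hk : 2 ≤ k) (hnm : m ≤ n) (hml : l ≤ m)
    (hd : 2 ≤ d) (ha1 : 1 ≤ a) (ha9 : a ≤ 9)
    (heq : lucasK k n * lucasK k m * lucasK k l = a * ((10 ^ d - 1) / 9))
    (α : ℝ) (hroot : α ^ k = ∑ i ∈ Finset.range k, α ^ i)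
    (hα₁ : 2 * (1 - (2 : ℝ) ^ (-(k : ℤ))) < α) (hα₂ : α < 2) :
    |α ^ (-((n : ℤ) + m - 2)) * 10 ^ d *
        ((α - 1) / (2 + ((k : ℝ) + 1) * (α - 2))) ^ (-2 : ℤ) *
        (2 * α - 1) ^ (-2 : ℤ) * ((lucasK k l : ℝ))⁻¹ * ((a : ℝ) / 9) - 1|
      < (25 / 4) / α ^ ((m : ℤ) - 2) :=
  linear_form_Lambda2_bound_general k n m l d a hk hnm ha9 heq α hroot hα₁ hα₂
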